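/- For m ≥ 3 and n ≥ 1, the kernel of the reduction map GL_n(ℤ) → GL_n(ℤ/mℤ) is torsion-free. -/

import Mathlib

/-!
An element of finite order in the kernel has a power of prime order `p`, whose matrix is
`1 + B` with `q ^ a ∣ B` for a prime power `q ^ a > 2` dividing `m`. Expanding `(1 + B) ^ p = 1`
gives `p • B = -∑_{k ≥ 2} (p.choose k) • B ^ k`. If `p ≠ q` the right side is divisible by
`q ^ (a + 1)`, hence so is `B`; if `p = q`, the binomial coefficients with `1 < k < p` and the
bound `q ^ a > 2` (for `k = p = 2`) make it divisible by `q ^ (a + 2)`. Either way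
`q ^ (a + 1) ∣ B`, so by iteration every power of `q` divides `B`, and `B = 0`.
-/

/-- A monoid is torsion-free if no element besides `1` has finite order
(definition of Mathlib's former `Monoid.IsTorsionFree`). -/
def Monoid.IsTorsionFree (G : Type*) [Monoid G] : Prop :=
  ∀ g : G, g ≠ 1 → ¬IsOfFinOrder g

open Finset

theorem Monoid.isTorsionFree_of_pow_prime_eq_one {G : Type*} [Monoid G]
    (h : ∀ g : G, ∀ p : ℕ, p.Prime → g ^ p = 1 → g = 1) : Monoid.IsTorsionFree G := by
  intro g hg hfin
  obtain ⟨p, hp, hpg⟩ := Nat.exists_prime_and_dvd (mt orderOf_eq_one_iff.mp hg)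
  have hord : orderOf (g ^ (orderOf g / p)) = p :=
    orderOf_pow_orderOf_div hfin.orderOf_pos.ne' hpg
  have h1 : g ^ (orderOf g / p) = 1 :=
    h _ p hp (by simpa only [hord] using pow_orderOf_eq_one (g ^ (orderOf g / p)))
  exact hp.one_lt.ne' (by rwa [h1, orderOf_one, eq_comm] at hord)

theorem Nat.exists_prime_pow_dvd_of_three_le {m : ℕ} (hm : 3 ≤ m) :
    ∃ q a : ℕ, q.Prime ∧ 2 < q ^ a ∧ q ^ a ∣ m := by
  by_cases hodd : ∃ q, q.Prime ∧ q ∣ m ∧ q ≠ 2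
  · obtain ⟨q, hq, hqm, hq2⟩ := hodd
    exact ⟨q, 1, hq, by rw [pow_one]; exact hq.two_le.lt_of_ne' hq2, by rwa [pow_one]⟩
  · push Not at hodd
    have hm2 := Nat.eq_prime_pow_of_unique_prime_dvd (by omega) fun hd hdm => hodd _ hd hdm
    exact ⟨2, _, Nat.prime_two, hm2 ▸ hm, hm2 ▸ dvd_rfl⟩

theorem Nat.Prime.sq_dvd_choose_mul_pow {p a k : ℕ} (hp : p.Prime) (ha : 2 < p ^ a)
    (hk : k + 2 ≤ p) : p ^ 2 ∣ p.choose (k + 2) * (p ^ a) ^ (k + 1) := by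
  have ha0 : a ≠ 0 := by rintro rfl; simp at ha
  rcases hk.lt_or_eq with hlt | rfl
  · rw [sq]
    exact mul_dvd_mul (hp.dvd_choose_self (by omega) hlt) (dvd_pow (dvd_pow_self p ha0) (by omega))
  · refine Dvd.dvd.mul_left ?_ _
    rw [← pow_mul]
    refine pow_dvd_pow _ ?_
    rcases k with _ | k
    · have : 2 ^ 1 < 2 ^ a := by simpa using ha
      have : 1 < a := (Nat.pow_lt_pow_iff_right (by norm_num)).mp this
      omega
    · nlinarith [Nat.one_le_iff_ne_zero.mpr ha0]

theorem Int.eq_zero_of_forall_pow_dvd {q : ℕ} (hq : 2 ≤ q) {z : ℤ}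
    (h : ∀ k, (q : ℤ) ^ k ∣ z) : z = 0 :=
  Int.eq_zero_of_dvd_of_natAbs_lt_natAbs (h z.natAbs) (by simpa using Nat.lt_pow_self hq)

theorem Nat.Coprime.natCast_dvd_of_dvd_mul_left {R : Type*} [Ring R] {p q : ℕ}
    (h : p.Coprime q) {x : R} (hx : (q : R) ∣ p * x) : (q : R) ∣ x := by
  obtain ⟨u, v, huv⟩ := Nat.isCoprime_iff_coprime.mpr h
  obtain ⟨y, hy⟩ := hx
  have hx : x = q * (u * y) + q * (v * x) := by
    calc x = ((u * p + v * q : ℤ) : R) * x := by rw [huv, Int.cast_one, one_mul]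
      _ = u * (p * x) + v * q * x := by push_cast; rw [add_mul, mul_assoc]
      _ = q * (u * y) + q * (v * x) := by
        rw [hy, (Int.cast_commute u (q : R)).left_comm, (Int.cast_commute v (q : R)).eq, mul_assoc]
  exact hx ▸ dvd_add (Dvd.intro _ rfl) (Dvd.intro _ rfl)

section TorsionFreeRing

variable {R : Type*} [Ring R] [IsAddTorsionFree R]

theorem sum_choose_mul_pow_eq_zero_of_one_add_mul_pow_eq_one {d p : ℕ} (hd : d ≠ 0) {C : R}
    (h : (1 + (d : R) * C) ^ p = 1) :
    ∑ k ∈ range p, ((p.choose (k + 1) * d ^ k : ℕ) : R) * C ^ (k + 1) = 0 := by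
  have hexp := (Commute.one_right ((d : R) * C)).add_pow p
  rw [add_comm, h, sum_range_succ'] at hexp
  simp only [one_pow, mul_one, pow_zero, Nat.choose_zero_right, Nat.cast_one] at hexp
  apply nsmul_right_injective hd
  simp only [nsmul_eq_mul, mul_zero, mul_sum]
  rw [← add_eq_right.mp hexp.symm]
  refine sum_congr rfl fun k _ => ?_
  rw [(Nat.cast_commute d C).mul_pow, ← (Nat.cast_commute _ _).eq, ← mul_assoc, ← mul_assoc,
    ← Nat.cast_pow, ← Nat.cast_mul, ← Nat.cast_mul]
  congr 2
  ring

theorem natCast_dvd_of_one_add_pow_eq_one {p q a : ℕ} (hp : p.Prime) (hq : q.Prime)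
    (hqa : 2 < q ^ a) {C : R} (h : (1 + (q : R) ^ a * C) ^ p = 1) : (q : R) ∣ C := by
  have ha : a ≠ 0 := by rintro rfl; simp at hqa
  have hsum := sum_choose_mul_pow_eq_zero_of_one_add_mul_pow_eq_one (d := q ^ a) (C := C)
    (pow_ne_zero a hq.ne_zero) (by rwa [Nat.cast_pow])
  obtain ⟨t, rfl⟩ := Nat.exists_eq_add_one_of_ne_zero hp.ne_zero
  rw [sum_range_succ'] at hsum
  simp only [Nat.choose_one_right, pow_zero, mul_one, zero_add, pow_one] at hsum
  set S := ∑ k ∈ range t, (((t + 1).choose (k + 2) * (q ^ a) ^ (k + 1) : ℕ) : R) * C ^ (k + 2)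
  have hpC : ((t + 1 : ℕ) : R) * C = -S := eq_neg_of_add_eq_zero_right hsum
  have hS : ∀ j, (∀ k < t, q ^ j ∣ (t + 1).choose (k + 2) * (q ^ a) ^ (k + 1)) →
      (q : R) ^ j ∣ S :=
    fun j hj => dvd_sum fun k hk =>
      (by exact_mod_cast Nat.cast_dvd_cast (hj k (mem_range.mp hk)) : (q : R) ^ j ∣ _).mul_right _
  by_cases hpq : t + 1 = q
  · subst hpq
    obtain ⟨Z, hZ⟩ := hS 2 fun k hk => hq.sq_dvd_choose_mul_pow hqa (by omega)
    refine ⟨-Z, nsmul_right_injective hq.ne_zero ?_⟩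
    simp only [nsmul_eq_mul, hpC, hZ, mul_neg, sq, mul_assoc]
  · have hcop := (Nat.coprime_primes hp hq).mpr hpq
    refine hcop.natCast_dvd_of_dvd_mul_left ?_
    rw [hpC, dvd_neg]
    simpa using hS 1 fun k _ => by
      rw [pow_one]; exact Dvd.dvd.mul_left (dvd_pow (dvd_pow_self q ha) k.succ_ne_zero) _

theorem natCast_pow_add_dvd_sub_one_of_pow_eq_one {p q a : ℕ} (hp : p.Prime) (hq : q.Prime)
    (hqa : 2 < q ^ a) {X : R} (hX : X ^ p = 1) (hdvd : (q : R) ^ a ∣ X - 1) (k : ℕ) :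
    (q : R) ^ (a + k) ∣ X - 1 := by
  induction k with
  | zero => exact hdvd
  | succ k ih =>
    obtain ⟨C, hC⟩ := ih
    have hqak : 2 < q ^ (a + k) :=
      hqa.trans_le (Nat.pow_le_pow_right hq.pos (Nat.le_add_right a k))
    obtain ⟨D, rfl⟩ := natCast_dvd_of_one_add_pow_eq_one hp hq hqak (C := C)
      (by rw [← hC, add_sub_cancel, hX])
    rw [← add_assoc, pow_succ, hC, ← mul_assoc]
    exact dvd_mul_right _ _

end TorsionFreeRing

namespace Matrix

instance instIsAddTorsionFree {m n α : Type*} [AddMonoid α] [IsAddTorsionFree α] :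
    IsAddTorsionFree (Matrix m n α) :=
  Pi.instIsAddTorsionFree

variable {n : Type*} [Fintype n] [DecidableEq n]

theorem natCast_dvd_iff {R : Type*} [CommSemiring R] {c : ℕ} {A : Matrix n n R} :
    (c : Matrix n n R) ∣ A ↔ ∀ i j, (c : R) ∣ A i j := by
  constructor
  · rintro ⟨D, rfl⟩ i j
    exact ⟨D i j, by rw [← nsmul_eq_mul, smul_apply, nsmul_eq_mul]⟩
  · intro h
    choose D hD using h
    exact ⟨of D, by ext i j; rw [← nsmul_eq_mul, smul_apply, nsmul_eq_mul, of_apply, hD]⟩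

theorem natCast_dvd_sub_iff_map_intCast_eq {m : ℕ} {A B : Matrix n n ℤ} :
    (m : Matrix n n ℤ) ∣ A - B ↔ A.map (Int.cast : ℤ → ZMod m) = B.map Int.cast := by
  rw [natCast_dvd_iff, ← ext_iff]
  refine forall₂_congr fun i j => ?_
  rw [map_apply, map_apply, eq_comm, ZMod.intCast_eq_intCast_iff_dvd_sub, sub_apply]

theorem eq_zero_of_forall_natCast_pow_dvd {q : ℕ} (hq : 2 ≤ q) {A : Matrix n n ℤ}
    (h : ∀ k, (q : Matrix n n ℤ) ^ k ∣ A) : A = 0 := by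
  ext i j
  refine Int.eq_zero_of_forall_pow_dvd hq fun k => ?_
  exact_mod_cast natCast_dvd_iff.mp (by exact_mod_cast h k) i j

theorem eq_one_of_pow_eq_one_of_natCast_dvd_sub_one {m p : ℕ} (hm : 3 ≤ m) (hp : p.Prime)
    {M : Matrix n n ℤ} (hM : M ^ p = 1) (hdvd : (m : Matrix n n ℤ) ∣ M - 1) : M = 1 := by
  obtain ⟨q, a, hq, hqa, hqam⟩ := Nat.exists_prime_pow_dvd_of_three_le hm
  have hqa_dvd : (q : Matrix n n ℤ) ^ a ∣ M - 1 := by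
    simpa using (Nat.cast_dvd_cast hqam : ((q ^ a : ℕ) : Matrix n n ℤ) ∣ m).trans hdvd
  refine sub_eq_zero.mp (eq_zero_of_forall_natCast_pow_dvd hq.two_le fun k => ?_)
  exact (pow_dvd_pow _ (Nat.le_add_left k a)).trans
    (natCast_pow_add_dvd_sub_one_of_pow_eq_one hp hq hqa hM hqa_dvd k)

end Matrix

theorem ker_reduction_GL_torsionFree_general (n m : ℕ) (hm : 3 ≤ m) :
    Monoid.IsTorsionFree
      (MonoidHom.ker (Units.map ((Int.castRingHom (ZMod m)).mapMatrix.toMonoidHom) :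
        GL (Fin n) ℤ →* GL (Fin n) (ZMod m))) := by
  refine Monoid.isTorsionFree_of_pow_prime_eq_one fun g p hp hgp => ?_
  have hpow : ((g : GL (Fin n) ℤ) : Matrix (Fin n) (Fin n) ℤ) ^ p = 1 := by
    rw [← Units.val_pow_eq_pow_val, ← Subgroup.coe_pow, hgp]
    rfl
  have hred : ((g : GL (Fin n) ℤ) : Matrix (Fin n) (Fin n) ℤ).map (Int.cast : ℤ → ZMod m) =
      (1 : Matrix (Fin n) (Fin n) ℤ).map Int.cast := by
    simpa using congrArg Units.val (MonoidHom.mem_ker.mp g.2)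
  exact Subtype.ext <| Units.ext <| Matrix.eq_one_of_pow_eq_one_of_natCast_dvd_sub_one hm hp hpow
    (Matrix.natCast_dvd_sub_iff_map_intCast_eq.mpr hred)

/-- Minkowski's lemma: for `m ≥ 3` and `n ≥ 1`, the kernel of the reduction map
`GL_n(ℤ) → GL_n(ℤ/mℤ)` is torsion-free. -/
theorem ker_reduction_GL_torsionFree (n m : ℕ) (hn : 1 ≤ n) (hm : 3 ≤ m) :
    Monoid.IsTorsionFree
      (MonoidHom.ker (Units.map ((Int.castRingHom (ZMod m)).mapMatrix.toMonoidHom) :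
        GL (Fin n) ℤ →* GL (Fin n) (ZMod m))) :=
  ker_reduction_GL_torsionFree_general n m hm
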